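/- arXiv:1812.00781 — 6 statements merged into one kernel-verified Lean document; each statement's English description precedes it below -/
import Mathlib

section
/- For a positive real number k and all m ≥ n ≥ 0, the k-Fibonacci sequence satisfies d'Ocagne's identity: F_{k,m} · F_{k,n+1} − F_{k,m+1} · F_{k,n} = (−1)^n · F_{k,m−n}. -/
noncomputable def kFib (k : ℝ) : ℕ → ℝ
  | 0 => 0
  | 1 => 1
  | (n + 2) => k * kFib k (n + 1) + kFib k n

noncomputable def kLucas (k : ℝ) : ℕ → ℝ
  | 0 => 2
  | 1 => k
  | (n + 2) => k * kLucas k (n + 1) + kLucas k n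

noncomputable def HF (k : ℝ) (n : ℕ) : Fin 4 → ℝ :=
  ![kFib k n, kFib k (n + 1), kFib k (n + 2), kFib k (n + 3)]

noncomputable def HL (k : ℝ) (n : ℕ) : Fin 4 → ℝ :=
  ![kLucas k n, kLucas k (n + 1), kLucas k (n + 2), kLucas k (n + 3)]

def hconj (a : Fin 4 → ℝ) : Fin 4 → ℝ := ![a 0, -a 1, -a 2, -a 3]

def hmul (a b : Fin 4 → ℝ) : Fin 4 → ℝ :=
  ![a 0 * b 0 + a 1 * b 1 + a 2 * b 2 + a 3 * b 3,
    a 0 * b 1 + a 1 * b 0 + a 2 * b 3 - a 3 * b 2,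
    a 0 * b 2 + a 2 * b 0 - a 1 * b 3 + a 3 * b 1,
    a 0 * b 3 + a 3 * b 0 + a 1 * b 2 - a 2 * b 1]

theorem kFib_add_two (k : ℝ) (n : ℕ) : kFib k (n + 2) = k * kFib k (n + 1) + kFib k n := rfl

theorem kFib_add_mul_kFib_succ_sub (k : ℝ) (d n : ℕ) :
    kFib k (n + d) * kFib k (n + 1) - kFib k (n + d + 1) * kFib k n = (-1) ^ n * kFib k d := by
  induction n with
  | zero => simp [kFib]
  | succ n ih =>
    have sign_flip : kFib k (n + d + 1) * kFib k (n + 2) - kFib k (n + d + 2) * kFib k (n + 1) =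
        -(kFib k (n + d) * kFib k (n + 1) - kFib k (n + d + 1) * kFib k n) := by
      rw [kFib_add_two, kFib_add_two k (n + d)]
      ring
    rw [show n + 1 + d = n + d + 1 by omega]
    linear_combination sign_flip - ih

theorem dOcagne_general (k : ℝ) (n m : ℕ) (h : n ≤ m) :
    kFib k m * kFib k (n + 1) - kFib k (m + 1) * kFib k n = (-1) ^ n * kFib k (m - n) := by
  obtain ⟨d, rfl⟩ := Nat.exists_eq_add_of_le h
  rw [Nat.add_sub_cancel_left]
  exact kFib_add_mul_kFib_succ_sub k d n

theorem dOcagne (k : ℝ) (hk : 0 < k) (n m : ℕ) (h : n ≤ m) :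
    kFib k m * kFib k (n + 1) - kFib k (m + 1) * kFib k n = (-1) ^ n * kFib k (m - n) :=
  dOcagne_general k n m h
end

section
/- For a positive real number k and all n ≥ 0, the k-Fibonacci sequence satisfies F_{k,n}² + F_{k,n+1}² = F_{k,2n+1}. -/
theorem kFib_add_add_one (k : ℝ) (m n : ℕ) :
    kFib k (m + n + 1) = kFib k (m + 1) * kFib k (n + 1) + kFib k m * kFib k n := by
  induction n using Nat.twoStepInduction with
  | zero => simp [kFib]
  | one => simp [kFib]; ring
  | more n ih₁ ih₂ =>
    have h : kFib k (m + (n + 2) + 1) = k * kFib k (m + (n + 1) + 1) + kFib k (m + n + 1) :=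
      kFib_add_two k (m + n + 1)
    rw [h, ih₁, ih₂, kFib_add_two k (n + 1), kFib_add_two k n]
    ring

theorem sum_of_squares_general (k : ℝ) (n : ℕ) :
    kFib k n ^ 2 + kFib k (n + 1) ^ 2 = kFib k (2 * n + 1) := by
  rw [two_mul, kFib_add_add_one]
  ring

theorem sum_of_squares (k : ℝ) (hk : 0 < k) (n : ℕ) :
    kFib k n ^ 2 + kFib k (n + 1) ^ 2 = kFib k (2 * n + 1) :=
  sum_of_squares_general k n
end

section
/- For a positive real number k and all n ≥ 1, the sum of the even-indexed k-Fibonacci numbers satisfies ∑_{i=1}^{n} F_{k,2i} = (F_{k,2n+1} − 1)/k. -/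
/-! Since `k F_{2i} = F_{2i+1} - F_{2i-1}`, multiplying the sum by `k` makes it telescope to
`F_{2n+1} - F_1`. -/

theorem kFib_one (k : ℝ) : kFib k 1 = 1 := rfl

theorem mul_sum_kFib_even (k : ℝ) (n : ℕ) :
    k * ∑ i ∈ Finset.Icc 1 n, kFib k (2 * i) = kFib k (2 * n + 1) - 1 := by
  induction n with
  | zero => simp [kFib_one]
  | succ m ih =>
    rw [Finset.sum_Icc_succ_top (by omega), mul_add, ih,
      show 2 * (m + 1) + 1 = 2 * m + 1 + 2 by ring, kFib_add_two,
      show 2 * m + 1 + 1 = 2 * (m + 1) by ring]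
    ring

theorem sum_even_kFib_general (k : ℝ) (hk : 0 < k) (n : ℕ) :
    ∑ i ∈ Finset.Icc 1 n, kFib k (2 * i) = (kFib k (2 * n + 1) - 1) / k := by
  rw [eq_div_iff hk.ne', mul_comm, mul_sum_kFib_even]

theorem sum_even_kFib (k : ℝ) (hk : 0 < k) (n : ℕ) (hn : 1 ≤ n) :
    ∑ i ∈ Finset.Icc 1 n, kFib k (2 * i) = (kFib k (2 * n + 1) - 1) / k :=
  sum_even_kFib_general k hk n
end

section
/- For a positive real number k and all n ≥ 2, the hyperbolic k-Fibonacci and k-Lucas quaternions satisfy HF_{k,n+2} − HF_{k,n−2} = k·HL_{k,n}. -/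
/-! `L_{k,n+1} = F_{k,n} + F_{k,n+2}`, as both sides satisfy the `k`-recurrence. Unfolding the
recurrence once at each end gives `F_{k,n+4} - F_{k,n} = k (F_{k,n+3} + F_{k,n+1}) = k L_{k,n+2}`,
which is the claimed identity read off componentwise. -/

theorem kLucas_succ_eq_kFib_add (k : ℝ) (n : ℕ) :
    kLucas k (n + 1) = kFib k n + kFib k (n + 2) := by
  induction n using Nat.twoStepInduction with
  | zero => simp [kFib, kLucas]
  | one => simp only [kFib, kLucas]; ring
  | more n ih₁ ih₂ =>
    have hL : kLucas k (n + 3) = k * kLucas k (n + 2) + kLucas k (n + 1) := rfl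
    rw [hL, ih₁, ih₂]
    simp only [kFib]
    ring

theorem kFib_add_four_sub (k : ℝ) (n : ℕ) :
    kFib k (n + 4) - kFib k n = k * kLucas k (n + 2) := by
  rw [kLucas_succ_eq_kFib_add]
  simp only [kFib]
  ring

theorem HF_HL_diff_general (k : ℝ) (n : ℕ) (hn : 2 ≤ n) :
    HF k (n + 2) - HF k (n - 2) = k • HL k n := by
  obtain ⟨m, rfl⟩ := Nat.exists_eq_add_of_le' hn
  ext i
  fin_cases i <;> simp [HF, HL, ← kFib_add_four_sub, add_assoc]

theorem HF_HL_diff (k : ℝ) (hk : 0 < k) (n : ℕ) (hn : 2 ≤ n) :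
    HF k (n + 2) - HF k (n - 2) = k • HL k n :=
  HF_HL_diff_general k n hn
end

section
/- For a positive real number k and n ≥ 1, the sum of hyperbolic k-Fibonacci quaternions satisfies ∑_{s=1}^{n} HF_{k,s} = (1/k)·(HF_{k,n+1} + HF_{k,n} − HF_{k,1} − HF_{k,0}). -/
/-- Since `k • u s = (u (s + 1) + u s) - (u s + u (s - 1))`, the sum telescopes. -/
theorem smul_sum_Icc_eq_of_recurrence {R M : Type*} [Semiring R] [AddCommGroup M] [Module R M]
    (k : R) (u : ℕ → M) (hu : ∀ n, u (n + 2) = k • u (n + 1) + u n) (n : ℕ) :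
    k • ∑ s ∈ Finset.Icc 1 n, u s = u (n + 1) + u n - u 1 - u 0 := by
  induction n with
  | zero => simp
  | succ m ih =>
    rw [Finset.sum_Icc_succ_top (Nat.le_add_left 1 m), smul_add, ih, hu m]
    abel

theorem HF_add_two (k : ℝ) (n : ℕ) : HF k (n + 2) = k • HF k (n + 1) + HF k n := by
  ext i
  fin_cases i <;> simp [HF, kFib_add_two]

theorem sum_HF_general (k : ℝ) (hk : 0 < k) (n : ℕ) :
    ∑ s ∈ Finset.Icc 1 n, HF k s = (1 / k) • (HF k (n + 1) + HF k n - HF k 1 - HF k 0) := by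
  rw [← smul_sum_Icc_eq_of_recurrence k (HF k) (HF_add_two k) n, smul_smul,
    one_div_mul_cancel hk.ne', one_smul]

theorem sum_HF (k : ℝ) (hk : 0 < k) (n : ℕ) (hn : 1 ≤ n) :
    ∑ s ∈ Finset.Icc 1 n, HF k s = (1 / k) • (HF k (n + 1) + HF k n - HF k 1 - HF k 0) :=
  sum_HF_general k hk n
end

section
/- Binet's formula for hyperbolic k-Fibonacci quaternions: for every n ≥ 0, HF_{k,n} = (α̂·α^n − β̂·β^n)/√(k²+4), where α = (k+√(k²+4))/2, β = (k−√(k²+4))/2, α̂ = (1, α, α², α³), and β̂ = (1, β, β², β³) (componentwise, since α^m and β^m multiply each component). -/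
/-! By Vieta, any two numbers `α, β` with `α + β = k` and `α β = -1` satisfy
`α ^ (n + 2) - β ^ (n + 2) = k (α ^ (n + 1) - β ^ (n + 1)) + (α ^ n - β ^ n)`, the recurrence of
`kFib k`; comparing initial values gives `(α - β) F_{k,n} = α ^ n - β ^ n`. Each component of
`HF k n` is such a Fibonacci number, and `(k ± √(k² + 4)) / 2` is such a pair. -/

section Binet

variable {k α β : ℝ}

theorem sub_mul_kFib (hsum : α + β = k) (hprod : α * β = -1) (n : ℕ) :
    (α - β) * kFib k n = α ^ n - β ^ n := by
  induction n using Nat.twoStepInduction with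
  | zero => simp [kFib]
  | one => simp [kFib]
  | more n ih ih' =>
    rw [kFib]
    linear_combination k * ih' + ih + (β ^ (n + 1) - α ^ (n + 1)) * hsum
      + (α ^ n - β ^ n) * hprod

theorem kFib_eq_div (hsum : α + β = k) (hprod : α * β = -1) (hne : α ≠ β) (n : ℕ) :
    kFib k n = (α ^ n - β ^ n) / (α - β) := by
  rw [eq_div_iff (sub_ne_zero.mpr hne), mul_comm, sub_mul_kFib hsum hprod]

theorem HF_eq_smul (hsum : α + β = k) (hprod : α * β = -1) (hne : α ≠ β) (n : ℕ) :
    HF k n = (1 / (α - β)) •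
      (α ^ n • ![(1 : ℝ), α, α ^ 2, α ^ 3] - β ^ n • ![(1 : ℝ), β, β ^ 2, β ^ 3]) := by
  funext i
  fin_cases i <;>
    simp only [HF, kFib_eq_div hsum hprod hne, Pi.smul_apply, Pi.sub_apply, smul_eq_mul,
      Fin.reduceFinMk, Matrix.cons_val] <;> ring

end Binet

theorem HF_binet_general (k : ℝ) (n : ℕ) :
    HF k n = (1 / Real.sqrt (k ^ 2 + 4)) •
      (((k + Real.sqrt (k ^ 2 + 4)) / 2) ^ n •
          ![(1 : ℝ), (k + Real.sqrt (k ^ 2 + 4)) / 2, ((k + Real.sqrt (k ^ 2 + 4)) / 2) ^ 2,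
            ((k + Real.sqrt (k ^ 2 + 4)) / 2) ^ 3] -
        ((k - Real.sqrt (k ^ 2 + 4)) / 2) ^ n •
          ![(1 : ℝ), (k - Real.sqrt (k ^ 2 + 4)) / 2, ((k - Real.sqrt (k ^ 2 + 4)) / 2) ^ 2,
            ((k - Real.sqrt (k ^ 2 + 4)) / 2) ^ 3]) := by
  set s := Real.sqrt (k ^ 2 + 4)
  have hs_sq : s ^ 2 = k ^ 2 + 4 := Real.sq_sqrt (by positivity)
  have hs_pos : 0 < s := Real.sqrt_pos.mpr (by positivity)
  have hsub : (k + s) / 2 - (k - s) / 2 = s := by ring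
  have hprod : (k + s) / 2 * ((k - s) / 2) = -1 := by linear_combination -hs_sq / 4
  have hne : (k + s) / 2 ≠ (k - s) / 2 := by linarith
  simpa only [hsub] using HF_eq_smul (by ring) hprod hne n

theorem HF_binet (k : ℝ) (hk : 0 < k) (n : ℕ) :
    HF k n = (1 / Real.sqrt (k ^ 2 + 4)) •
      (((k + Real.sqrt (k ^ 2 + 4)) / 2) ^ n •
          ![(1 : ℝ), (k + Real.sqrt (k ^ 2 + 4)) / 2, ((k + Real.sqrt (k ^ 2 + 4)) / 2) ^ 2,
            ((k + Real.sqrt (k ^ 2 + 4)) / 2) ^ 3] -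
        ((k - Real.sqrt (k ^ 2 + 4)) / 2) ^ n •
          ![(1 : ℝ), (k - Real.sqrt (k ^ 2 + 4)) / 2, ((k - Real.sqrt (k ^ 2 + 4)) / 2) ^ 2,
            ((k - Real.sqrt (k ^ 2 + 4)) / 2) ^ 3]) :=
  HF_binet_general k n
end
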